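/- Let (X, ρ) be a metric space, μ a Borel probability measure, and φ ∈ Φ_ex with γ := γ_φ. If the φ-loss F^φ_μ is finite, then for all p, q ∈ X with ρ(p,q) ≤ 1, |F^φ_μ(p) − F^φ_μ(q)| ≤ ρ(p,q)·(γ·φ(1) + (γ−1)·min(F^φ_μ(p), F^φ_μ(q))). In particular, F^φ_μ is locally Lipschitz continuous. -/

import Mathlib

/-!
Writing `d = ρ(p,q) ≤ 1`, convexity of `φ` on `[x, x+1]` gives
`φ(x + d) ≤ (1 - d) φ(x) + d φ(x + 1)`, and the definition of `γ` bounds `φ(x + 1)` by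
`γ (φ(1) + φ(x))`. With `x = ρ(q,y)` and the triangle inequality this yields the pointwise bound
`φ(ρ(p,y)) ≤ φ(ρ(q,y)) + d (γ φ(1) + (γ - 1) φ(ρ(q,y)))`, which integrates to
`F(p) - F(q) ≤ d (γ φ(1) + (γ - 1) F(q))`. Exchanging `p` and `q` gives the estimate with the
minimum, and on a ball of radius `1/2` that minimum is bounded, so `F` is locally Lipschitz.
-/

open Set Filter

/-- `Φ`: convex, strictly increasing bijections of `[0,∞)` (with `φ 0 = 0`). -/
def Phi (φ : ℝ → ℝ) : Prop :=
  ConvexOn ℝ (Ici 0) φ ∧ StrictMonoOn φ (Ici 0) ∧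
    Set.BijOn φ (Ici 0) (Ici 0) ∧ φ 0 = 0

/-- `γ_φ = sup_{x ≥ 0} φ(1+x)/(φ(1)+φ(x))`, valued in `[0,∞]`. -/
noncomputable def gam (φ : ℝ → ℝ) : ENNReal :=
  ⨆ x : Ici (0:ℝ), ENNReal.ofReal (φ (1 + x) / (φ 1 + φ x))

open MeasureTheory

namespace Phi

variable {φ : ℝ → ℝ} {γ x : ℝ}

theorem nonneg (hφ : Phi φ) (hx : 0 ≤ x) : 0 ≤ φ x :=
  hφ.2.2.2 ▸ hφ.2.1.monotoneOn self_mem_Ici hx hx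

theorem apply_one_pos (hφ : Phi φ) : 0 < φ 1 :=
  hφ.2.2.2 ▸ hφ.2.1 self_mem_Ici (mem_Ici.2 zero_le_one) one_pos

theorem ofReal_div_le_gam (hx : 0 ≤ x) :
    ENNReal.ofReal (φ (1 + x) / (φ 1 + φ x)) ≤ gam φ :=
  le_iSup (fun z : Ici (0:ℝ) => ENNReal.ofReal (φ (1 + z) / (φ 1 + φ z))) ⟨x, hx⟩

theorem one_le_of_gam_eq (hφ : Phi φ) (hγ : gam φ = ENNReal.ofReal γ) : 1 ≤ γ := by
  have h := hγ ▸ ofReal_div_le_gam (φ := φ) le_rfl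
  rw [add_zero, hφ.2.2.2, add_zero, div_self hφ.apply_one_pos.ne', ENNReal.ofReal_one,
    ENNReal.one_le_ofReal] at h
  exact h

theorem apply_one_add_le (hφ : Phi φ) (hγ : gam φ = ENNReal.ofReal γ) (hx : 0 ≤ x) :
    φ (1 + x) ≤ γ * (φ 1 + φ x) := by
  have hden : 0 < φ 1 + φ x := add_pos_of_pos_of_nonneg hφ.apply_one_pos (hφ.nonneg hx)
  have h := hγ ▸ ofReal_div_le_gam (φ := φ) hx
  rw [ENNReal.ofReal_le_ofReal_iff (zero_le_one.trans (hφ.one_le_of_gam_eq hγ))] at h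
  exact (div_le_iff₀ hden).1 h

theorem apply_add_le (hφ : Phi φ) (hγ : gam φ = ENNReal.ofReal γ) (hx : 0 ≤ x) {d : ℝ}
    (hd₀ : 0 ≤ d) (hd₁ : d ≤ 1) :
    φ (x + d) ≤ φ x + d * (γ * φ 1 + (γ - 1) * φ x) := by
  have hconv := hφ.1.2 (mem_Ici.2 hx) (mem_Ici.2 (by linarith : 0 ≤ x + 1))
    (sub_nonneg.2 hd₁) hd₀ (sub_add_cancel 1 d)
  have hsum : (1 - d) • x + d • (x + 1) = x + d := by simp only [smul_eq_mul]; ring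
  rw [hsum, smul_eq_mul, smul_eq_mul, add_comm x 1] at hconv
  nlinarith [hφ.apply_one_add_le hγ hx]

end Phi

theorem integral_phi_dist_sub_le {X : Type*} [PseudoMetricSpace X] [MeasurableSpace X]
    {μ : Measure X} [IsProbabilityMeasure μ] {φ : ℝ → ℝ} (hφ : Phi φ) {γ : ℝ}
    (hγ : gam φ = ENNReal.ofReal γ) {p q : X} (hq : Integrable (fun y => φ (dist q y)) μ)
    (hpq : dist p q ≤ 1) :
    ∫ y, φ (dist p y) ∂μ - ∫ y, φ (dist q y) ∂μ ≤
      dist p q * (γ * φ 1 + (γ - 1) * ∫ y, φ (dist q y) ∂μ) := by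
  set d := dist p q
  have hpointwise : ∀ y, φ (dist p y) ≤ (1 + d * (γ - 1)) * φ (dist q y) + d * (γ * φ 1) := by
    intro y
    have htri : dist p y ≤ dist q y + d := by linarith [dist_triangle_left p y q, dist_comm q p]
    have hmono := hφ.2.1.monotoneOn (mem_Ici.2 dist_nonneg)
      (mem_Ici.2 (add_nonneg dist_nonneg dist_nonneg)) htri
    linarith [hφ.apply_add_le hγ dist_nonneg dist_nonneg hpq (x := dist q y)]
  have h : ∫ y, φ (dist p y) ∂μ ≤ ∫ y, ((1 + d * (γ - 1)) * φ (dist q y) + d * (γ * φ 1)) ∂μ :=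
    integral_mono_of_nonneg (Eventually.of_forall fun y => hφ.nonneg dist_nonneg)
      ((hq.const_mul _).add (integrable_const _)) (Eventually.of_forall hpointwise)
  rw [integral_add (hq.const_mul _) (integrable_const _), integral_const_mul, integral_const,
    probReal_univ, one_smul] at h
  linarith

section LocallyLipschitz

variable {X : Type*} [PseudoMetricSpace X] {F : X → ℝ} {a b : ℝ}

theorem abs_sub_le_dist_mul_min_of_sub_le
    (h : ∀ p q, dist p q ≤ 1 → F p - F q ≤ dist p q * (a + b * F q)) (p q : X)
    (hpq : dist p q ≤ 1) : |F p - F q| ≤ dist p q * (a + b * min (F p) (F q)) := by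
  rcases le_total (F p) (F q) with hle | hle
  · rw [min_eq_left hle, abs_sub_comm, abs_of_nonneg (sub_nonneg.2 hle), dist_comm]
    exact h q p (dist_comm p q ▸ hpq)
  · rw [min_eq_right hle, abs_of_nonneg (sub_nonneg.2 hle)]
    exact h p q hpq

theorem locallyLipschitz_of_abs_sub_le_dist_mul_min (hb : 0 ≤ b)
    (h : ∀ p q, dist p q ≤ 1 → |F p - F q| ≤ dist p q * (a + b * min (F p) (F q))) :
    LocallyLipschitz F := by
  intro x
  set C := a + b * (F x + |a + b * F x|)
  have hbound : ∀ p, dist p x ≤ 1 → F p ≤ F x + |a + b * F x| := by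
    intro p hp
    have hmin : dist p x * (a + b * min (F p) (F x)) ≤ dist p x * (a + b * F x) :=
      mul_le_mul_of_nonneg_left (by gcongr; exact min_le_right _ _) dist_nonneg
    have hscale : dist p x * (a + b * F x) ≤ |a + b * F x| :=
      (mul_le_mul_of_nonneg_left (le_abs_self _) dist_nonneg).trans
        (mul_le_of_le_one_left (abs_nonneg _) hp)
    linarith [le_abs_self (F p - F x), h p x hp]
  refine ⟨C.toNNReal, Metric.ball x (1 / 2), Metric.ball_mem_nhds x one_half_pos,
    LipschitzOnWith.of_dist_le_mul fun p hp q hq => ?_⟩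
  rw [Metric.mem_ball] at hp hq
  have hpq : dist p q ≤ 1 := by linarith [dist_triangle_right p q x]
  have hmin : a + b * min (F p) (F q) ≤ C := add_le_add_right (mul_le_mul_of_nonneg_left
    ((min_le_left _ _).trans (hbound p (hp.le.trans (by norm_num)))) hb) a
  calc dist (F p) (F q) ≤ dist p q * (a + b * min (F p) (F q)) := h p q hpq
    _ ≤ dist p q * C := mul_le_mul_of_nonneg_left hmin dist_nonneg
    _ ≤ C.toNNReal * dist p q := by
      rw [mul_comm]
      exact mul_le_mul_of_nonneg_right (Real.le_coe_toNNReal C) dist_nonneg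

end LocallyLipschitz

theorem stmt_16_general {X : Type*} [MetricSpace X] [MeasurableSpace X]
    (μ : MeasureTheory.Measure X) [MeasureTheory.IsProbabilityMeasure μ]
    (φ : ℝ → ℝ) (hφ : Phi φ) (γ : ℝ)
    (hγ : gam φ = ENNReal.ofReal γ)
    (hint : ∀ x : X, MeasureTheory.Integrable (fun y => φ (dist x y)) μ)
    (F : X → ℝ) (hF : ∀ x, F x = ∫ y, φ (dist x y) ∂μ) :
    (∀ p q : X, dist p q ≤ 1 →
      |F p - F q| ≤ dist p q * (γ * φ 1 + (γ - 1) * min (F p) (F q))) ∧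
    LocallyLipschitz F := by
  have hsub : ∀ p q, dist p q ≤ 1 → F p - F q ≤ dist p q * (γ * φ 1 + (γ - 1) * F q) :=
    fun p q hpq => by simpa only [hF] using integral_phi_dist_sub_le hφ hγ (hint q) hpq
  have habs := abs_sub_le_dist_mul_min_of_sub_le hsub
  exact ⟨habs, locallyLipschitz_of_abs_sub_le_dist_mul_min
    (sub_nonneg.2 (hφ.one_le_of_gam_eq hγ)) habs⟩

/-- If `φ ∈ Φ_ex` with `γ_φ = γ` and the φ-loss `F(x) = ∫ φ(ρ(x,y)) dμ(y)` is
finite (integrable) everywhere, then for all `p, q` with `ρ(p,q) ≤ 1`,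
`|F(p) − F(q)| ≤ ρ(p,q) (γ φ(1) + (γ−1) min(F(p), F(q)))`;
in particular `F` is locally Lipschitz. -/
theorem stmt_16 {X : Type*} [MetricSpace X] [MeasurableSpace X] [BorelSpace X]
    (μ : MeasureTheory.Measure X) [MeasureTheory.IsProbabilityMeasure μ]
    (φ : ℝ → ℝ) (hφ : Phi φ) (γ : ℝ)
    (hγ : gam φ = ENNReal.ofReal γ)
    (hint : ∀ x : X, MeasureTheory.Integrable (fun y => φ (dist x y)) μ)
    (F : X → ℝ) (hF : ∀ x, F x = ∫ y, φ (dist x y) ∂μ) :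
    (∀ p q : X, dist p q ≤ 1 →
      |F p - F q| ≤ dist p q * (γ * φ 1 + (γ - 1) * min (F p) (F q))) ∧
    LocallyLipschitz F :=
  stmt_16_general μ φ hφ γ hγ hint F hF
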